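/- arXiv:1308.6781 — 4 statements merged into one kernel-verified Lean document; each statement's English description precedes it below -/
import Mathlib

section
/- Let P be a bounded open convex subset of ℝⁿ containing a point τ. Then there exists a unique vector c ∈ ℝⁿ such that τ = (∫_P x e^{c·x} dx) / (∫_P e^{c·x} dx). -/
/-!
Write `Z c = ∫_P exp ⟪c, x - τ⟫ dx`. Its gradient is `∫_P exp ⟪c, x - τ⟫ (x - τ) dx`, and the
identity required of `c` says exactly that this gradient vanishes. A ball around `τ` lies in `P`,
so every half-space `{x | δ ‖c‖ ≤ ⟪c, x - τ⟫}` contains a translate of a fixed ball inside `P`, and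
Chebyshev's inequality gives `Z c ≥ V e^{δ ‖c‖}`. Hence `Z` attains its minimum, at a zero of the
gradient. Uniqueness is strict convexity of `Z`: for two critical points `c₁ ≠ c₂`, the integral
over `P` of `(e^{⟪c₁, y⟫} - e^{⟪c₂, y⟫}) ⟪c₁ - c₂, y⟫` with `y = x - τ` would vanish, although the
integrand is nonnegative and vanishes only on a hyperplane, which is Lebesgue-null.
-/

open MeasureTheory Metric Filter RealInnerProductSpace

variable {E : Type*} [NormedAddCommGroup E] [InnerProductSpace ℝ E]
  [MeasurableSpace E] [BorelSpace E]

lemma exp_sub_exp_mul_sub_pos {a b : ℝ} (h : a ≠ b) : 0 < (Real.exp a - Real.exp b) * (a - b) := by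
  rcases h.lt_or_gt with h | h
  · exact mul_pos_of_neg_of_neg (by simpa using h) (by linarith)
  · exact mul_pos (by simpa using h) (by linarith)

lemma measureReal_ball_le_restrict_setOf_le_inner (μ : Measure E) [μ.IsAddHaarMeasure]
    {P : Set E} [IsFiniteMeasure (μ.restrict P)] {τ : E} {δ : ℝ} (hP : ball τ (3 * δ) ⊆ P) (c : E) :
    μ.real (ball τ δ) ≤ (μ.restrict P).real {x | δ * ‖c‖ ≤ ⟪c, x - τ⟫} := by
  set u : E := ‖c‖⁻¹ • c
  have hu : ‖u‖ ≤ 1 ∧ ⟪c, u⟫ = ‖c‖ := by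
    rcases eq_or_ne c 0 with rfl | hc
    · simp [u]
    · have hc' : ‖c‖ ≠ 0 := norm_ne_zero_iff.mpr hc
      simp only [u, norm_smul, norm_inv, norm_norm, real_inner_smul_right,
        real_inner_self_eq_norm_sq, inv_mul_cancel₀ hc', le_refl, true_and]
      field_simp
  set p : E := τ + (2 * δ) • u
  have hball : ball p δ ⊆ ball τ (3 * δ) ∩ {x | δ * ‖c‖ ≤ ⟪c, x - τ⟫} := fun x hx => by
    have hxp : ‖x - p‖ < δ := mem_ball_iff_norm.mp hx
    have hδ : 0 ≤ δ := (norm_nonneg (x - p)).trans hxp.le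
    have hx_sub : x - τ = (x - p) + (2 * δ) • u := by simp only [p]; abel
    refine ⟨mem_ball_iff_norm.mpr ?_, ?_⟩
    · calc ‖x - τ‖ = ‖(x - p) + (2 * δ) • u‖ := by rw [hx_sub]
        _ ≤ ‖x - p‖ + 2 * δ * ‖u‖ := (norm_add_le _ _).trans_eq <| by
            rw [norm_smul, Real.norm_of_nonneg (by positivity)]
        _ < 3 * δ := by nlinarith [hu.1]
    · have := neg_le_of_abs_le ((abs_real_inner_le_norm c (x - p)).trans
        (mul_le_mul_of_nonneg_left hxp.le (norm_nonneg c)))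
      simp only [Set.mem_ofPred_eq, hx_sub, inner_add_right, real_inner_smul_right, hu.2]
      nlinarith [norm_nonneg c]
  calc μ.real (ball τ δ) = (μ.restrict P).real (ball p δ) := by
        rw [measureReal_def, measureReal_def, Measure.restrict_eq_self μ
          (hball.trans (Set.inter_subset_left.trans hP)), Measure.addHaar_ball_center,
          Measure.addHaar_ball_center μ p]
    _ ≤ (μ.restrict P).real {x | δ * ‖c‖ ≤ ⟪c, x - τ⟫} :=
        measureReal_mono (hball.trans Set.inter_subset_right)

variable [FiniteDimensional ℝ E]

lemma MeasureTheory.Measure.addHaar_setOf_inner_sub_eq_zero (μ : Measure E)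
    [μ.IsAddHaarMeasure] {v : E} (hv : v ≠ 0) (τ : E) : μ {x | ⟪v, x - τ⟫ = 0} = 0 := by
  have hne : (ℝ ∙ v)ᗮ ≠ ⊤ := fun h => hv <| inner_self_eq_zero.mp <|
    Submodule.mem_orthogonal_singleton_iff_inner_right.mp (h ▸ Submodule.mem_top)
  convert μ.addHaar_affineSubspace (AffineSubspace.mk' τ (ℝ ∙ v)ᗮ) fun h => hne ?_
  · ext x
    simp [AffineSubspace.mem_mk', Submodule.mem_orthogonal_singleton_iff_inner_right]
  · rw [← AffineSubspace.direction_mk' τ (ℝ ∙ v)ᗮ, h, AffineSubspace.direction_top]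

lemma not_ae_restrict_inner_sub_eq_zero (μ : Measure E) [μ.IsAddHaarMeasure] {P : Set E}
    (hP : μ P ≠ 0) (τ : E) {v : E} (hv : v ≠ 0) : ¬∀ᵐ x ∂μ.restrict P, ⟪v, x - τ⟫ = 0 := by
  intro h
  have hnull : ∀ᵐ x ∂μ.restrict P, x ∉ {x | ⟪v, x - τ⟫ = 0} :=
    ae_restrict_of_ae <| measure_eq_zero_iff_ae_notMem.mp <| μ.addHaar_setOf_inner_sub_eq_zero hv τ
  refine hP <| Measure.restrict_eq_zero.mp <| ae_eq_bot.mp <| eventually_false_iff_eq_bot.mp ?_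
  filter_upwards [h, hnull] with x hx hx' using hx' hx

section BoundedSupport

variable {ν : Measure E} [IsFiniteMeasure ν] {τ : E} {R : ℝ}

lemma integrable_of_ae_norm_sub_le (hR : ∀ᵐ x ∂ν, ‖x - τ‖ ≤ R) {F : Type*}
    [NormedAddCommGroup F] {φ : E → F} (hφ : Continuous φ) : Integrable φ ν := by
  have hν : ν.restrict (closedBall τ R) = ν :=
    Measure.restrict_eq_self_of_ae_mem (by simpa only [mem_closedBall_iff_norm] using hR)
  simpa only [IntegrableOn, hν] using
    hφ.continuousOn.integrableOn_compact (μ := ν) (isCompact_closedBall τ R)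

lemma hasGradientAt_integral_exp_inner_sub (hR : ∀ᵐ x ∂ν, ‖x - τ‖ ≤ R) (c₀ : E) :
    HasGradientAt (fun c => ∫ x, Real.exp ⟪c, x - τ⟫ ∂ν)
      (∫ x, Real.exp ⟪c₀, x - τ⟫ • (x - τ) ∂ν) c₀ := by
  have hexp : ∀ c : E, Continuous fun x : E => Real.exp ⟪c, x - τ⟫ := fun c => by fun_prop
  have hderiv : HasFDerivAt (fun c => ∫ x, Real.exp ⟪c, x - τ⟫ ∂ν)
      (∫ x, Real.exp ⟪c₀, x - τ⟫ • innerSL ℝ (x - τ) ∂ν) c₀ := by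
    refine hasFDerivAt_integral_of_dominated_of_fderiv_le (ball_mem_nhds c₀ one_pos)
      (F' := fun c x => Real.exp ⟪c, x - τ⟫ • innerSL ℝ (x - τ))
      (bound := fun _ => Real.exp ((‖c₀‖ + 1) * R) * R)
      (Eventually.of_forall fun c => (hexp c).aestronglyMeasurable)
      (integrable_of_ae_norm_sub_le hR (hexp c₀))
      (by fun_prop : Continuous fun x : E =>
        Real.exp ⟪c₀, x - τ⟫ • innerSL ℝ (x - τ)).aestronglyMeasurable
      ?_ (integrable_const _) (Eventually.of_forall fun x c _ => ?_)
    · filter_upwards [hR] with x hx c hc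
      have hc : ‖c‖ ≤ ‖c₀‖ + 1 := by
        linarith [norm_le_norm_add_norm_sub' c c₀, (mem_ball_iff_norm.mp hc).le]
      have hinner : ⟪c, x - τ⟫ ≤ (‖c₀‖ + 1) * R :=
        (real_inner_le_norm _ _).trans (mul_le_mul hc hx (norm_nonneg _) (by positivity))
      rw [norm_smul, innerSL_apply_norm, Real.norm_of_nonneg (Real.exp_pos _).le]
      exact mul_le_mul (Real.exp_le_exp.mpr hinner) hx (norm_nonneg _) (Real.exp_pos _).le
    · simpa only [innerSL_apply_apply, real_inner_comm] using
        ((innerSL ℝ (x - τ)).hasFDerivAt (x := c)).exp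
  have hdual : InnerProductSpace.toDual ℝ E (∫ x, Real.exp ⟪c₀, x - τ⟫ • (x - τ) ∂ν) =
      ∫ x, Real.exp ⟪c₀, x - τ⟫ • innerSL ℝ (x - τ) ∂ν := by
    have := (InnerProductSpace.toDual ℝ E).toLinearIsometry.integral_comp_comm (μ := ν)
      (fun x => Real.exp ⟪c₀, x - τ⟫ • (x - τ))
    simp only [LinearIsometry.map_smul] at this
    exact this.symm
  rw [hasGradientAt_iff_hasFDerivAt, hdual]
  exact hderiv

lemma integral_exp_inner_smul_eq_smul_iff (hR : ∀ᵐ x ∂ν, ‖x - τ‖ ≤ R) (c : E) :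
    (∫ x, Real.exp ⟪c, x⟫ • x ∂ν) = (∫ x, Real.exp ⟪c, x⟫ ∂ν) • τ ↔
      ∫ x, Real.exp ⟪c, x - τ⟫ • (x - τ) ∂ν = 0 := by
  have hshift : ∀ x, Real.exp ⟪c, x - τ⟫ = Real.exp (-⟪c, τ⟫) * Real.exp ⟪c, x⟫ := fun x => by
    rw [← Real.exp_add, inner_sub_right, neg_add_eq_sub]
  have hmoment : ∫ x, Real.exp ⟪c, x - τ⟫ • (x - τ) ∂ν =
      Real.exp (-⟪c, τ⟫) • ((∫ x, Real.exp ⟪c, x⟫ • x ∂ν) - (∫ x, Real.exp ⟪c, x⟫ ∂ν) • τ) := by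
    rw [← integral_smul_const, ← integral_sub (integrable_of_ae_norm_sub_le hR (by fun_prop))
      (integrable_of_ae_norm_sub_le hR (by fun_prop)), ← integral_smul]
    simp_rw [hshift, mul_smul, smul_sub]
  rw [hmoment, smul_eq_zero, sub_eq_zero, or_iff_right (Real.exp_ne_zero _)]

lemma exists_integral_exp_inner_sub_smul_eq_zero (hR : ∀ᵐ x ∂ν, ‖x - τ‖ ≤ R) {δ V : ℝ}
    (hδ : 0 < δ) (hV : 0 < V) (hmass : ∀ c : E, V ≤ ν.real {x | δ * ‖c‖ ≤ ⟪c, x - τ⟫}) :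
    ∃ c, ∫ x, Real.exp ⟪c, x - τ⟫ • (x - τ) ∂ν = 0 := by
  set Z : E → ℝ := fun c => ∫ x, Real.exp ⟪c, x - τ⟫ ∂ν
  have hZ := hasGradientAt_integral_exp_inner_sub hR
  have hZ_ge : ∀ c, V * Real.exp (δ * ‖c‖) ≤ Z c := fun c => by
    have hmarkov := mul_meas_ge_le_integral_of_nonneg (ae_of_all ν fun x => (Real.exp_pos _).le)
      (integrable_of_ae_norm_sub_le hR (by fun_prop : Continuous fun x => Real.exp ⟪c, x - τ⟫))
      (Real.exp (δ * ‖c‖))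
    simp_rw [Real.exp_le_exp] at hmarkov
    nlinarith [hmass c, Real.exp_pos (δ * ‖c‖)]
  have hZ_tendsto : Tendsto Z (cocompact E) atTop :=
    tendsto_atTop_mono hZ_ge <| ((Real.tendsto_exp_atTop.comp
      (tendsto_id.const_mul_atTop hδ)).const_mul_atTop hV).comp tendsto_norm_cocompact_atTop
  obtain ⟨c, hc⟩ := (continuous_iff_continuousAt.mpr fun c => (hZ c).continuousAt).exists_forall_le
    hZ_tendsto
  have hmin : IsLocalMin Z c := Eventually.of_forall hc
  exact ⟨c, (InnerProductSpace.toDual ℝ E).map_eq_zero_iff.mp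
    (hmin.hasFDerivAt_eq_zero (hasGradientAt_iff_hasFDerivAt.mp (hZ c)))⟩

lemma eq_of_integral_exp_inner_sub_smul_eq_zero (hR : ∀ᵐ x ∂ν, ‖x - τ‖ ≤ R)
    (hν : ∀ v : E, v ≠ 0 → ¬∀ᵐ x ∂ν, ⟪v, x - τ⟫ = 0) {c₁ c₂ : E}
    (h₁ : ∫ x, Real.exp ⟪c₁, x - τ⟫ • (x - τ) ∂ν = 0)
    (h₂ : ∫ x, Real.exp ⟪c₂, x - τ⟫ • (x - τ) ∂ν = 0) : c₁ = c₂ := by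
  by_contra hne
  refine hν (c₁ - c₂) (sub_ne_zero.mpr hne) ?_
  set g : E → ℝ := fun x =>
    (Real.exp ⟪c₁, x - τ⟫ - Real.exp ⟪c₂, x - τ⟫) * ⟪c₁ - c₂, x - τ⟫
  have hg_pos : ∀ x, ⟪c₁ - c₂, x - τ⟫ ≠ 0 → 0 < g x := fun x hx => by
    rw [inner_sub_left] at hx
    simpa only [g, inner_sub_left] using exp_sub_exp_mul_sub_pos (sub_ne_zero.mp hx)
  have hg_nonneg : 0 ≤ g := fun x => by
    by_cases hx : ⟪c₁ - c₂, x - τ⟫ = 0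
    · simp [g, hx]
    · exact (hg_pos x hx).le
  have hg_integral : ∫ x, g x ∂ν = 0 := by
    have hmoment : ∀ c, ∫ x, Real.exp ⟪c, x - τ⟫ * ⟪c₁ - c₂, x - τ⟫ ∂ν =
        ⟪c₁ - c₂, ∫ x, Real.exp ⟪c, x - τ⟫ • (x - τ) ∂ν⟫ := fun c => by
      rw [← integral_inner (integrable_of_ae_norm_sub_le hR (by fun_prop))]
      simp_rw [real_inner_smul_right]
    simp only [g, sub_mul]
    rw [integral_sub (integrable_of_ae_norm_sub_le hR (by fun_prop))
      (integrable_of_ae_norm_sub_le hR (by fun_prop)), hmoment, hmoment, h₁, h₂, sub_self]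
  filter_upwards [(integral_eq_zero_iff_of_nonneg hg_nonneg
    (integrable_of_ae_norm_sub_le hR (by fun_prop))).mp hg_integral] with x hx
  by_contra h
  exact (hg_pos x h).ne' hx

end BoundedSupport

theorem stmt0_general (n : ℕ) (P : Set (EuclideanSpace ℝ (Fin n)))
    (τ : EuclideanSpace ℝ (Fin n))
    (hopen : IsOpen P) (hbdd : Bornology.IsBounded P)
    (hpos : 0 < volume P) (hτ : τ ∈ P) :
    ∃! c : EuclideanSpace ℝ (Fin n),
      (∫ x in P, Real.exp (inner ℝ c x : ℝ) • x) =
        (∫ x in P, Real.exp (inner ℝ c x : ℝ)) • τ := by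
  have : IsFiniteMeasure (volume.restrict P) :=
    isFiniteMeasure_restrict.mpr hbdd.measure_lt_top.ne
  obtain ⟨R, hPR⟩ := hbdd.subset_closedBall τ
  have hR : ∀ᵐ x ∂volume.restrict P, ‖x - τ‖ ≤ R :=
    ae_restrict_of_forall_mem hopen.measurableSet fun x hx => mem_closedBall_iff_norm.mp (hPR hx)
  obtain ⟨ε, hε, hεP⟩ := Metric.isOpen_iff.mp hopen τ hτ
  have hball : ball τ (3 * (ε / 3)) ⊆ P := by rwa [mul_div_cancel₀ ε three_ne_zero]
  obtain ⟨c, hc⟩ := exists_integral_exp_inner_sub_smul_eq_zero hR (by positivity)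
    (ENNReal.toReal_pos (measure_ball_pos volume τ (by positivity)).ne' measure_ball_lt_top.ne)
    (measureReal_ball_le_restrict_setOf_le_inner volume hball)
  refine ⟨c, (integral_exp_inner_smul_eq_smul_iff hR c).mpr hc, fun c' hc' => ?_⟩
  exact eq_of_integral_exp_inner_sub_smul_eq_zero hR
    (fun v hv => not_ae_restrict_inner_sub_eq_zero volume hpos.ne' τ hv)
    ((integral_exp_inner_smul_eq_smul_iff hR c').mp hc') hc

theorem stmt0 (n : ℕ) (P : Set (EuclideanSpace ℝ (Fin n)))
    (τ : EuclideanSpace ℝ (Fin n))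
    (hopen : IsOpen P) (hconv : Convex ℝ P) (hbdd : Bornology.IsBounded P)
    (hpos : 0 < volume P) (hτ : τ ∈ P) :
    ∃! c : EuclideanSpace ℝ (Fin n),
      (∫ x in P, Real.exp (inner ℝ c x : ℝ) • x) =
        (∫ x in P, Real.exp (inner ℝ c x : ℝ)) • τ :=
  stmt0_general n P τ hopen hbdd hpos hτ
end

section
/- Let P be a bounded open convex subset of ℝⁿ with positive volume. The function F(c) = ∫_P e^{c·x} dx is strictly convex on ℝⁿ. -/
/-! For every `x`, `c ↦ exp ⟪c, x⟫` is convex, and strictly convex along the segment from `c` to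
`d` unless `⟪c, x⟫ = ⟪d, x⟫`. For `c ≠ d` this exceptional set is a hyperplane, hence Lebesgue-null,
so on a set of positive measure the pointwise Jensen gap has positive integral. Boundedness of the
domain makes all the integrals finite. -/

open MeasureTheory Set
open scoped RealInnerProductSpace

section

variable {E : Type*} [NormedAddCommGroup E] [InnerProductSpace ℝ E]

theorem exp_inner_smul_add_smul_le (c d x : E) {a b : ℝ} (ha : 0 ≤ a) (hb : 0 ≤ b)
    (hab : a + b = 1) :
    Real.exp ⟪a • c + b • d, x⟫ ≤ a * Real.exp ⟪c, x⟫ + b * Real.exp ⟪d, x⟫ := by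
  simpa [inner_add_left, real_inner_smul_left] using
    convexOn_exp.2 (mem_univ ⟪c, x⟫) (mem_univ ⟪d, x⟫) ha hb hab

theorem exp_inner_smul_add_smul_lt {c d x : E} (h : ⟪c, x⟫ ≠ ⟪d, x⟫) {a b : ℝ} (ha : 0 < a)
    (hb : 0 < b) (hab : a + b = 1) :
    Real.exp ⟪a • c + b • d, x⟫ < a * Real.exp ⟪c, x⟫ + b * Real.exp ⟪d, x⟫ := by
  simpa [inner_add_left, real_inner_smul_left] using
    strictConvexOn_exp.2 (mem_univ ⟪c, x⟫) (mem_univ ⟪d, x⟫) h ha hb hab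

end

section

variable {E : Type*} [NormedAddCommGroup E] [InnerProductSpace ℝ E] [FiniteDimensional ℝ E]
  [MeasurableSpace E] [BorelSpace E]

theorem addHaar_setOf_inner_eq_zero (μ : Measure E) [μ.IsAddHaarMeasure] {v : E} (hv : v ≠ 0) :
    μ {x | ⟪v, x⟫ = 0} = 0 := by
  have hset : {x | ⟪v, x⟫ = 0} = ((ℝ ∙ v)ᗮ : Set E) := by
    ext x
    simp [Submodule.mem_orthogonal_singleton_iff_inner_right]
  rw [hset]
  exact Measure.addHaar_submodule μ _ (by simpa [Submodule.orthogonal_eq_top_iff] using hv)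

theorem integrableOn_exp_inner (μ : Measure E) [IsFiniteMeasureOnCompacts μ] {s : Set E}
    (hs : Bornology.IsBounded s) (c : E) :
    IntegrableOn (fun x => Real.exp ⟪c, x⟫) s μ :=
  ((by fun_prop : Continuous fun x => Real.exp ⟪c, x⟫).continuousOn.integrableOn_compact
    hs.isCompact_closure).mono_set subset_closure

theorem strictConvexOn_setIntegral_exp_inner (μ : Measure E) [μ.IsAddHaarMeasure] {s : Set E}
    (hs : Bornology.IsBounded s) (hμs : 0 < μ s) :
    StrictConvexOn ℝ univ fun c => ∫ x in s, Real.exp ⟪c, x⟫ ∂μ := by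
  refine ⟨convex_univ, fun c _ d _ hcd a b ha hb hab => ?_⟩
  have hint := integrableOn_exp_inner μ hs
  have hint_comb : IntegrableOn (fun x => a * Real.exp ⟪c, x⟫ + b * Real.exp ⟪d, x⟫) s μ :=
    ((hint c).const_mul a).add ((hint d).const_mul b)
  set gap : E → ℝ := fun x =>
    a * Real.exp ⟪c, x⟫ + b * Real.exp ⟪d, x⟫ - Real.exp ⟪a • c + b • d, x⟫
  have hgap_nonneg : ∀ x, 0 ≤ gap x := fun x =>
    sub_nonneg.2 (exp_inner_smul_add_smul_le c d x ha.le hb.le hab)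
  have hsupport : s \ {x | ⟪c - d, x⟫ = 0} ⊆ Function.support gap ∩ s := by
    rintro x ⟨hxs, hx⟩
    refine ⟨(sub_pos.2 (exp_inner_smul_add_smul_lt ?_ ha hb hab)).ne', hxs⟩
    simpa [inner_sub_left, sub_eq_zero] using hx
  have hgap_pos : 0 < ∫ x in s, gap x ∂μ := by
    rw [setIntegral_pos_iff_support_of_nonneg_ae (.of_forall hgap_nonneg)
      (hint_comb.sub (hint _))]
    calc 0 < μ s := hμs
      _ = μ (s \ {x | ⟪c - d, x⟫ = 0}) :=
        (measure_sdiff_null (addHaar_setOf_inner_eq_zero μ (sub_ne_zero.2 hcd))).symm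
      _ ≤ μ (Function.support gap ∩ s) := measure_mono hsupport
  rw [integral_sub hint_comb (hint _),
    integral_add ((hint c).const_mul a) ((hint d).const_mul b), integral_const_mul,
    integral_const_mul] at hgap_pos
  simp only [smul_eq_mul]
  linarith

end

theorem stmt1_general (n : ℕ) (P : Set (EuclideanSpace ℝ (Fin n)))
    (hbdd : Bornology.IsBounded P)
    (hpos : 0 < volume P) :
    StrictConvexOn ℝ Set.univ
      (fun c : EuclideanSpace ℝ (Fin n) => ∫ x in P, Real.exp (inner ℝ c x : ℝ)) :=
  strictConvexOn_setIntegral_exp_inner volume hbdd hpos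

theorem stmt1 (n : ℕ) (P : Set (EuclideanSpace ℝ (Fin n)))
    (hopen : IsOpen P) (hconv : Convex ℝ P) (hbdd : Bornology.IsBounded P)
    (hpos : 0 < volume P) :
    StrictConvexOn ℝ Set.univ
      (fun c : EuclideanSpace ℝ (Fin n) => ∫ x in P, Real.exp (inner ℝ c x : ℝ)) :=
  stmt1_general n P hbdd hpos
end

section
/- Let P be a bounded open convex subset of ℝⁿ with positive volume containing the origin in its interior. Then the function F(c) = ∫_P e^{c·x} dx is proper, i.e., F(c) → ∞ as |c| → ∞. -/
/-!
Being open, `P` contains some ball `B(0, 3ρ)`, and for every `c` the ball of radius `ρ` centred at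
`2ρ • c / ‖c‖` lies in it as well; on that ball `⟪c, x⟫ ≥ ρ ‖c‖`. Hence
`F(c) ≥ vol(B(0, ρ)) · exp (ρ ‖c‖)`, which tends to infinity with `‖c‖`.
-/

open MeasureTheory Filter Metric

section

variable {E : Type*} [NormedAddCommGroup E] [InnerProductSpace ℝ E]

lemma ball_smul_norm_inv_subset_ball (c : E) {ρ : ℝ} (hρ : 0 ≤ ρ) :
    ball ((2 * ρ / ‖c‖) • c) ρ ⊆ ball 0 (3 * ρ) := by
  refine ball_subset_ball' ?_
  have hcenter : ‖(2 * ρ / ‖c‖) • c‖ ≤ 2 * ρ := by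
    rcases eq_or_ne c 0 with rfl | hc
    · simp [hρ]
    · rw [norm_smul, Real.norm_of_nonneg (by positivity), div_mul_cancel₀ _ (norm_ne_zero_iff.2 hc)]
  rw [dist_zero_right]
  linarith

lemma mul_norm_le_inner_of_mem_ball (c : E) {ρ : ℝ} {x : E}
    (hx : x ∈ ball ((2 * ρ / ‖c‖) • c) ρ) : ρ * ‖c‖ ≤ inner ℝ c x := by
  set p := (2 * ρ / ‖c‖) • c
  have hcp : inner ℝ c p = 2 * ρ * ‖c‖ := by
    rcases eq_or_ne c 0 with rfl | hc
    · simp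
    · rw [real_inner_smul_right, real_inner_self_eq_norm_sq]
      field_simp
  have hdev : -(‖c‖ * ρ) ≤ inner ℝ c (x - p) := by
    have hxp : ‖x - p‖ < ρ := by rwa [mem_ball, dist_eq_norm] at hx
    have := (abs_le.1 (abs_real_inner_le_norm c (x - p))).1
    nlinarith [norm_nonneg c]
  have hsplit : inner ℝ c x = inner ℝ c p + inner ℝ c (x - p) := by
    rw [← inner_add_right, add_sub_cancel]
  linarith

variable [FiniteDimensional ℝ E] [MeasurableSpace E] [BorelSpace E]

lemma integrableOn_exp_inner_of_isBounded (μ : Measure E) [IsFiniteMeasureOnCompacts μ]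
    (c : E) {P : Set E} (hP : Bornology.IsBounded P) :
    IntegrableOn (fun x => Real.exp (inner ℝ c x)) P μ :=
  ((Real.continuous_exp.comp (continuous_const.inner continuous_id)).continuousOn
    |>.integrableOn_compact hP.isCompact_closure).mono_set subset_closure

lemma measureReal_ball_mul_exp_le_setIntegral_exp_inner (μ : Measure E) [μ.IsAddHaarMeasure]
    (c : E) {P : Set E} (hP : Bornology.IsBounded P) {ρ : ℝ} (hρ : 0 ≤ ρ)
    (hball : ball 0 (3 * ρ) ⊆ P) :
    μ.real (ball 0 ρ) * Real.exp (ρ * ‖c‖) ≤ ∫ x in P, Real.exp (inner ℝ c x) ∂μ := by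
  set B := ball ((2 * ρ / ‖c‖) • c) ρ
  have hBP : B ⊆ P := (ball_smul_norm_inv_subset_ball c hρ).trans hball
  have hint := integrableOn_exp_inner_of_isBounded μ c hP
  calc μ.real (ball 0 ρ) * Real.exp (ρ * ‖c‖)
      = Real.exp (ρ * ‖c‖) * μ.real B := by
        rw [mul_comm, Measure.addHaar_real_ball_center μ ((2 * ρ / ‖c‖) • c)]
    _ ≤ ∫ x in B, Real.exp (inner ℝ c x) ∂μ :=
        setIntegral_ge_of_const_le_real measurableSet_ball measure_ball_lt_top.ne
          (fun x hx => Real.exp_le_exp.2 (mul_norm_le_inner_of_mem_ball c hx)) (hint.mono_set hBP)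
    _ ≤ ∫ x in P, Real.exp (inner ℝ c x) ∂μ :=
        setIntegral_mono_set hint (Eventually.of_forall fun _ => (Real.exp_pos _).le)
          hBP.eventuallyLE

end

theorem stmt2_general (n : ℕ) (P : Set (EuclideanSpace ℝ (Fin n)))
    (hopen : IsOpen P) (hbdd : Bornology.IsBounded P)
    (h0 : (0 : EuclideanSpace ℝ (Fin n)) ∈ P) :
    Tendsto (fun c : EuclideanSpace ℝ (Fin n) => ∫ x in P, Real.exp (inner ℝ c x : ℝ))
      (comap (fun c => ‖c‖) atTop) atTop := by
  obtain ⟨r, hr, hball⟩ := Metric.isOpen_iff.1 hopen 0 h0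
  set ρ := r / 3
  have hρ : 0 < ρ := by positivity
  have hV : 0 < volume.real (ball (0 : EuclideanSpace ℝ (Fin n)) ρ) :=
    ENNReal.toReal_pos (measure_ball_pos _ _ hρ).ne' measure_ball_lt_top.ne
  have hlower : Tendsto (fun c : EuclideanSpace ℝ (Fin n) =>
      volume.real (ball (0 : EuclideanSpace ℝ (Fin n)) ρ) * Real.exp (ρ * ‖c‖))
      (comap (fun c => ‖c‖) atTop) atTop :=
    ((Real.tendsto_exp_atTop.comp (tendsto_id.const_mul_atTop hρ)).const_mul_atTop hV).comp
      tendsto_comap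
  refine tendsto_atTop_mono (fun c => ?_) hlower
  exact measureReal_ball_mul_exp_le_setIntegral_exp_inner volume c hbdd hρ.le
    (by rwa [show 3 * ρ = r by ring])

theorem stmt2 (n : ℕ) (P : Set (EuclideanSpace ℝ (Fin n)))
    (hopen : IsOpen P) (hconv : Convex ℝ P) (hbdd : Bornology.IsBounded P)
    (hpos : 0 < volume P) (h0 : (0 : EuclideanSpace ℝ (Fin n)) ∈ P) :
    Tendsto (fun c : EuclideanSpace ℝ (Fin n) => ∫ x in P, Real.exp (inner ℝ c x : ℝ))
      (comap (fun c => ‖c‖) atTop) atTop :=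
  stmt2_general n P hopen hbdd h0
end

section
/- Let f : [0,∞) → ℝ be nonnegative and non-increasing, and let V(r) = ∫₀ʳ f(s)g(s) ds where g ≥ 0. Then for 0 < r₁ ≤ r₂ ≤ r₃, (V(r₃) − V(r₂))/(G(r₃) − G(r₂)) ≤ V(r₁)/G(r₁), where G(r) = ∫₀ʳ g(s) ds, provided G(r₁) > 0 and G(r₃) > G(r₂). -/
open MeasureTheory intervalIntegral

theorem stmt16 (f g : ℝ → ℝ)
    (hf0 : ∀ s, 0 ≤ s → 0 ≤ f s) (hfa : AntitoneOn f (Set.Ici 0))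
    (hg0 : ∀ s, 0 ≤ g s)
    (hgint : ∀ r : ℝ, IntervalIntegrable g volume 0 r)
    (hfgint : ∀ r : ℝ, IntervalIntegrable (fun s => f s * g s) volume 0 r)
    (r₁ r₂ r₃ : ℝ) (h1 : 0 < r₁) (h12 : r₁ ≤ r₂) (h23 : r₂ ≤ r₃)
    (hG1 : 0 < ∫ s in (0:ℝ)..r₁, g s)
    (hG23 : (∫ s in (0:ℝ)..r₂, g s) < ∫ s in (0:ℝ)..r₃, g s) :
    ((∫ s in (0:ℝ)..r₃, f s * g s) - ∫ s in (0:ℝ)..r₂, f s * g s) /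
        ((∫ s in (0:ℝ)..r₃, g s) - ∫ s in (0:ℝ)..r₂, g s) ≤
      (∫ s in (0:ℝ)..r₁, f s * g s) / ∫ s in (0:ℝ)..r₁, g s := by
  have h02 : (0:ℝ) ≤ r₂ := le_trans h1.le h12
  have hgint23 : IntervalIntegrable g volume r₂ r₃ :=
    (hgint r₃).mono_set (by
      rw [Set.uIcc_of_le h23, Set.uIcc_of_le (h02.trans h23)]
      exact Set.Icc_subset_Icc_left h02)
  have hfgint23' : IntervalIntegrable (fun s => f s * g s) volume r₂ r₃ := by
    refine (hfgint r₃).mono_set ?_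
    rw [Set.uIcc_of_le h23, Set.uIcc_of_le (h02.trans h23)]
    exact Set.Icc_subset_Icc_left h02
  -- step 1: numerator equals ∫ r₂..r₃
  have hVsub : (∫ s in (0:ℝ)..r₃, f s * g s) - (∫ s in (0:ℝ)..r₂, f s * g s)
      = ∫ s in r₂..r₃, f s * g s :=
    intervalIntegral.integral_interval_sub_left (hfgint r₃) (hfgint r₂)
  have hGsub : (∫ s in (0:ℝ)..r₃, g s) - (∫ s in (0:ℝ)..r₂, g s)
      = ∫ s in r₂..r₃, g s :=
    intervalIntegral.integral_interval_sub_left (hgint r₃) (hgint r₂)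
  -- step 2: ∫ r₂..r₃ f g ≤ f r₂ * ∫ r₂..r₃ g
  have hbound : (∫ s in r₂..r₃, f s * g s) ≤ f r₂ * ∫ s in r₂..r₃, g s := by
    rw [← intervalIntegral.integral_const_mul]
    apply intervalIntegral.integral_mono_on h23 hfgint23'
      ((hgint23).const_mul (f r₂))
    intro x hx
    exact mul_le_mul_of_nonneg_right
      (hfa (Set.mem_Ici.mpr h02) (Set.mem_Ici.mpr (h02.trans hx.1)) hx.1) (hg0 x)
  -- step 3: f r₁ * G r₁ ≤ V r₁
  have hlow : f r₁ * (∫ s in (0:ℝ)..r₁, g s) ≤ ∫ s in (0:ℝ)..r₁, f s * g s := by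
    rw [← intervalIntegral.integral_const_mul]
    apply intervalIntegral.integral_mono_on h1.le ((hgint r₁).const_mul (f r₁))
      (hfgint r₁)
    intro x hx
    exact mul_le_mul_of_nonneg_right
      (hfa (Set.mem_Ici.mpr hx.1) (Set.mem_Ici.mpr h1.le) hx.2) (hg0 x)
  have hf21 : f r₂ ≤ f r₁ := hfa (Set.mem_Ici.mpr h1.le) (Set.mem_Ici.mpr h02) h12
  have hden : 0 < (∫ s in (0:ℝ)..r₃, g s) - (∫ s in (0:ℝ)..r₂, g s) :=
    sub_pos.mpr hG23
  calc ((∫ s in (0:ℝ)..r₃, f s * g s) - ∫ s in (0:ℝ)..r₂, f s * g s) /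
        ((∫ s in (0:ℝ)..r₃, g s) - ∫ s in (0:ℝ)..r₂, g s)
      ≤ f r₂ := by
        rw [div_le_iff₀ hden, hVsub, hGsub]
        exact hbound
    _ ≤ f r₁ := hf21
    _ ≤ (∫ s in (0:ℝ)..r₁, f s * g s) / ∫ s in (0:ℝ)..r₁, g s := by
        rw [le_div_iff₀ hG1]; exact hlow
end
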